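/- arXiv:1708.03761 — 3 statements merged into one kernel-verified Lean document; each statement's English description precedes it below -/
import Mathlib

section
/- Let p, n ≥ 1, let x₁, …, xₙ, x ∈ ℝ^p, let w₁, …, wₙ ≥ 0, and let ε > 0 with n_{w,ε} = Σᵢ wᵢ + ε > 1. Define μ_{w,ε} = (1/n_{w,ε})(Σᵢ wᵢ xᵢ + ε x), the (n+1)×p matrix X_{w,ε} with i-th row √wᵢ (xᵢ − μ_{w,ε})ᵀ for i ≤ n and last row √ε (x − μ_{w,ε})ᵀ, the vector y_{w,ε} = e_{n+1} ∈ ℝ^{n+1}, and Σ_{w,ε} = (1/(n_{w,ε} − 1)) X_{w,ε}ᵀ X_{w,ε}. Assume Σ_{w,ε} is invertible. Then the function β ↦ ‖y_{w,ε} − X_{w,ε} β‖² on ℝ^p has a unique global minimizer, given by θ_ε = (√ε / (n_{w,ε} − 1)) Σ_{w,ε}⁻¹ (x − μ_{w,ε}). -/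
/-!
Since `Σ_{w,ε}` is a nonzero multiple of the Gram matrix `XᵀX`, the latter is invertible, so `X` is
injective, and `y = e_{n+1}` gives `Xᵀ y = √ε (x − μ)`, the last row of `X`. Hence `θ_ε` solves the
normal equations `XᵀX θ = Xᵀ y`, which make the residual `y − X θ` orthogonal to the range of `X`.
By Pythagoras `‖y − X β‖² = ‖y − X θ‖² + ‖X (β − θ)‖²`, and the last term vanishes only at `β = θ`.
-/

open Matrix

namespace Matrix

variable {m n R : Type*} [Fintype m] [Fintype n]

lemma mulVec_injective_of_isUnit_transpose_mul_self [CommRing R] [DecidableEq n]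
    {X : Matrix m n R} (h : IsUnit (Xᵀ * X)) : Function.Injective X.mulVec :=
  fun u v huv => mulVec_injective_of_isUnit h (by rw [← mulVec_mulVec, ← mulVec_mulVec, huv])

lemma dotProduct_self_sub_mulVec_of_normal_eq [CommRing R] {X : Matrix m n R} {y : m → R}
    {θ : n → R} (hθ : (Xᵀ * X) *ᵥ θ = Xᵀ *ᵥ y) (β : n → R) :
    (y - X *ᵥ β) ⬝ᵥ (y - X *ᵥ β) =
      (y - X *ᵥ θ) ⬝ᵥ (y - X *ᵥ θ) + (X *ᵥ (β - θ)) ⬝ᵥ (X *ᵥ (β - θ)) := by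
  have horth : (y - X *ᵥ θ) ⬝ᵥ (X *ᵥ (β - θ)) = 0 := by
    rw [dotProduct_mulVec, ← mulVec_transpose, mulVec_sub, mulVec_mulVec, hθ, sub_self,
      zero_dotProduct]
  have hsplit : y - X *ᵥ β = (y - X *ᵥ θ) - X *ᵥ (β - θ) := by
    rw [mulVec_sub]
    abel
  rw [hsplit]
  generalize y - X *ᵥ θ = r at horth ⊢
  generalize X *ᵥ (β - θ) = v at horth ⊢
  rw [sub_dotProduct, dotProduct_sub, dotProduct_sub, dotProduct_comm v r, horth]
  ring

lemma dotProduct_self_sub_mulVec_lt_of_normal_eq [CommRing R] [LinearOrder R]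
    [IsStrictOrderedRing R] {X : Matrix m n R} {y : m → R} {θ β : n → R}
    (hX : Function.Injective X.mulVec) (hθ : (Xᵀ * X) *ᵥ θ = Xᵀ *ᵥ y) (hβ : β ≠ θ) :
    (y - X *ᵥ θ) ⬝ᵥ (y - X *ᵥ θ) < (y - X *ᵥ β) ⬝ᵥ (y - X *ᵥ β) := by
  have hXd : X *ᵥ (β - θ) ≠ 0 := by
    rw [mulVec_sub, sub_ne_zero]
    exact hX.ne hβ
  have hpos : 0 < (X *ᵥ (β - θ)) ⬝ᵥ (X *ᵥ (β - θ)) :=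
    lt_of_le_of_ne (Fintype.sum_nonneg fun _ => mul_self_nonneg _)
      (Ne.symm (dotProduct_self_eq_zero.not.mpr hXd))
  rw [dotProduct_self_sub_mulVec_of_normal_eq hθ β]
  exact lt_add_of_pos_right _ hpos

end Matrix

theorem augmented_least_squares_unique_minimizer_general (p n : ℕ)
    (xs : Fin n → Fin p → ℝ) (x : Fin p → ℝ) (w : Fin n → ℝ)
    (ε : ℝ) (hnwε : 1 < ∑ i, w i + ε)
    (μ : Fin p → ℝ)
    (X : Matrix (Fin (n + 1)) (Fin p) ℝ)
    (hX : X = Matrix.of fun i j =>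
      Fin.lastCases (Real.sqrt ε * (x j - μ j))
        (fun k => Real.sqrt (w k) * (xs k j - μ j)) i)
    (y : Fin (n + 1) → ℝ) (hy : y = Pi.single (Fin.last n) 1)
    (Swε : Matrix (Fin p) (Fin p) ℝ)
    (hSwε : Swε = (1 / (∑ i, w i + ε - 1)) • (Xᵀ * X))
    (hSinv : IsUnit Swε)
    (θ : Fin p → ℝ)
    (hθ : θ = (Real.sqrt ε / (∑ i, w i + ε - 1)) • (Swε⁻¹ *ᵥ (x - μ))) :
    ∀ β : Fin p → ℝ, β ≠ θ →
      (y - X *ᵥ θ) ⬝ᵥ (y - X *ᵥ θ) < (y - X *ᵥ β) ⬝ᵥ (y - X *ᵥ β) := by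
  have hc : ∑ i, w i + ε - 1 ≠ 0 := by linarith
  have hgram : Xᵀ * X = (∑ i, w i + ε - 1) • Swε := by
    rw [hSwε, smul_smul, mul_one_div_cancel hc, one_smul]
  have hXty : Xᵀ *ᵥ y = Real.sqrt ε • (x - μ) := by
    ext j
    simp [hy, hX]
  have hnormal : (Xᵀ * X) *ᵥ θ = Xᵀ *ᵥ y := by
    rw [hgram, hθ, hXty, smul_mulVec, mulVec_smul, mulVec_mulVec,
      mul_nonsing_inv _ ((isUnit_iff_isUnit_det _).mp hSinv), one_mulVec, smul_smul,
      mul_div_cancel₀ _ hc]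
  have hX_inj : Function.Injective X.mulVec :=
    mulVec_injective_of_isUnit_transpose_mul_self (hgram ▸ hSinv.smul (Units.mk0 _ hc))
  exact fun β hβ => dotProduct_self_sub_mulVec_lt_of_normal_eq hX_inj hnormal hβ

/-- The augmented least-squares problem `β ↦ ‖y_{w,ε} − X_{w,ε} β‖²` has a
unique global minimizer, given in closed form by
`θ_ε = (√ε / (n_{w,ε} − 1)) Σ_{w,ε}⁻¹ (x − μ_{w,ε})`. -/
theorem augmented_least_squares_unique_minimizer (p n : ℕ) (hp : 1 ≤ p) (hn : 1 ≤ n)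
    (xs : Fin n → Fin p → ℝ) (x : Fin p → ℝ) (w : Fin n → ℝ) (hw : ∀ i, 0 ≤ w i)
    (ε : ℝ) (hε : 0 < ε) (hnwε : 1 < ∑ i, w i + ε)
    (μ : Fin p → ℝ)
    (hμ : μ = (1 / (∑ i, w i + ε)) • (∑ i, w i • xs i + ε • x))
    (X : Matrix (Fin (n + 1)) (Fin p) ℝ)
    (hX : X = Matrix.of fun i j =>
      Fin.lastCases (Real.sqrt ε * (x j - μ j))
        (fun k => Real.sqrt (w k) * (xs k j - μ j)) i)
    (y : Fin (n + 1) → ℝ) (hy : y = Pi.single (Fin.last n) 1)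
    (Swε : Matrix (Fin p) (Fin p) ℝ)
    (hSwε : Swε = (1 / (∑ i, w i + ε - 1)) • (Xᵀ * X))
    (hSinv : IsUnit Swε)
    (θ : Fin p → ℝ)
    (hθ : θ = (Real.sqrt ε / (∑ i, w i + ε - 1)) • (Swε⁻¹ *ᵥ (x - μ))) :
    ∀ β : Fin p → ℝ, β ≠ θ →
      (y - X *ᵥ θ) ⬝ᵥ (y - X *ᵥ θ) < (y - X *ᵥ β) ⬝ᵥ (y - X *ᵥ β) :=
  augmented_least_squares_unique_minimizer_general p n xs x w ε hnwε μ X hX y hy Swε hSwε hSinv θ hθ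
end

section
/- (Theorem 2.1.) Let p, n ≥ 1, let x₁, …, xₙ ∈ ℝ^p with nonnegative weights w₁, …, wₙ satisfying n_w = Σᵢ wᵢ > 1, and let x ∈ ℝ^p be an arbitrary point. Let μ_w = (1/n_w) Σᵢ wᵢ xᵢ and Σ_w = (1/(n_w − 1)) Σᵢ wᵢ (xᵢ − μ_w)(xᵢ − μ_w)ᵀ; assume Σ_w is invertible and x ≠ μ_w. For ε > 0 define n_{w,ε} = n_w + ε, μ_{w,ε} = (1/n_{w,ε})(Σᵢ wᵢ xᵢ + ε x), let y_{w,ε} = e_{n+1} ∈ ℝ^{n+1}, and let X_{w,ε} be the (n+1)×p matrix with rows √wᵢ (xᵢ − μ_{w,ε})ᵀ for i = 1, …, n and last row √ε (x − μ_{w,ε})ᵀ. Suppose there is ε₀ > 0 such that for every ε ∈ (0, ε₀) the matrix X_{w,ε}ᵀ X_{w,ε} is invertible, and let θ_ε = (X_{w,ε}ᵀ X_{w,ε})⁻¹ X_{w,ε}ᵀ y_{w,ε} denote the unique minimizer of β ↦ ‖y_{w,ε} − X_{w,ε} β‖² over β ∈ ℝ^p. Then the direction of maximal outlyingness satisfies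 a(x) := Σ_w⁻¹(x − μ_w)/‖Σ_w⁻¹(x − μ_w)‖ = lim_{ε → 0⁺} θ_ε / ‖θ_ε‖ (in particular θ_ε ≠ 0 for small ε and the limit exists). -/
/-!
For `ε > 0` the Gram matrix `X_εᵀ X_ε` equals
`G ε = Σ wᵢ (xᵢ - μ_ε)(xᵢ - μ_ε)ᵀ + ε (x - μ_ε)(x - μ_ε)ᵀ` and `X_εᵀ y = √ε (x - μ_ε)`, so
`θ_ε = √ε · G(ε)⁻¹ (x - μ_ε)`. The positive factor `√ε` disappears on normalizing, while
`ε ↦ G(ε)⁻¹ (x - μ_ε)` is continuous at `0` because `G 0 = (n_w - 1) Σ_w` is invertible. Its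
value there is a positive multiple of `Σ_w⁻¹ (x - μ_w) ≠ 0`, and normalization is continuous away
from `0`.
-/

open Matrix Filter Topology

namespace Matrix

section LastCases

variable {ι R : Type*} {n : ℕ} (r : Fin n → ι → R) (s : ι → R)

theorem transpose_mul_self_of_lastCases [NonUnitalNonAssocSemiring R] :
    (of fun i j => Fin.lastCases (s j) (fun k => r k j) i : Matrix (Fin (n + 1)) ι R)ᵀ *
        (of fun i j => Fin.lastCases (s j) (fun k => r k j) i : Matrix (Fin (n + 1)) ι R) =
      ∑ k, vecMulVec (r k) (r k) + vecMulVec s s := by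
  ext i j
  rw [mul_apply, Fin.sum_univ_castSucc]
  simp [sum_apply, vecMulVec_apply]

theorem transpose_mulVec_single_last_of_lastCases [NonAssocSemiring R] :
    (of fun i j => Fin.lastCases (s j) (fun k => r k j) i : Matrix (Fin (n + 1)) ι R)ᵀ *ᵥ
      Pi.single (Fin.last n) 1 = s := by
  ext j
  simp [mulVec, dotProduct, Pi.single_apply]

end LastCases

theorem vecMulVec_sqrt_smul_self {ι : Type*} {a : ℝ} (ha : 0 ≤ a) (u : ι → ℝ) :
    vecMulVec (√a • u) (√a • u) = a • vecMulVec u u := by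
  rw [smul_vecMulVec, vecMulVec_smul, smul_smul, Real.mul_self_sqrt ha]

theorem inv_smul_of_ne_zero {K ι : Type*} [Field K] [Fintype ι] [DecidableEq ι]
    (A : Matrix ι ι K) {c : K} (hc : c ≠ 0) : (c • A)⁻¹ = c⁻¹ • A⁻¹ := by
  by_cases hA : IsUnit A.det
  · exact inv_smul' A (Units.mk0 c hc) hA
  · have hcA : ¬IsUnit (c • A).det := by simpa [det_smul, isUnit_iff_ne_zero, hc] using hA
    rw [nonsing_inv_apply_not_isUnit _ hA, nonsing_inv_apply_not_isUnit _ hcA, smul_zero]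

end Matrix

theorem ContinuousAt.matrix_inv_mulVec {X ι K : Type*} [TopologicalSpace X] [Fintype ι]
    [DecidableEq ι] [Field K] [TopologicalSpace K] [IsTopologicalDivisionRing K]
    {A : X → Matrix ι ι K} {b : X → ι → K} {a : X} (hA : ContinuousAt A a)
    (hb : ContinuousAt b a) (hAa : IsUnit (A a)) :
    ContinuousAt (fun t => (A t)⁻¹ *ᵥ b t) a := by
  have hdet : (A a).det ≠ 0 := ((isUnit_iff_isUnit_det _).1 hAa).ne_zero
  have hinv : ContinuousAt Inv.inv (A a) :=
    continuousAt_matrix_inv _ (by simpa [Ring.inverse_eq_inv'] using continuousAt_inv₀ hdet)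
  exact (continuous_fst.matrix_mulVec continuous_snd).continuousAt.comp
    ((hinv.comp hA).prodMk hb)

section DotNormalize

variable {ι : Type*} [Fintype ι]

/-- `v / ‖v‖` for the Euclidean norm; junk value `0` at `v = 0`. -/
noncomputable def dotNormalize (v : ι → ℝ) : ι → ℝ := (√(v ⬝ᵥ v))⁻¹ • v

theorem dotNormalize_smul_of_pos {c : ℝ} (hc : 0 < c) (v : ι → ℝ) :
    dotNormalize (c • v) = dotNormalize v := by
  have hsq : √((c • v) ⬝ᵥ (c • v)) = c * √(v ⬝ᵥ v) := by
    rw [smul_dotProduct, dotProduct_smul, smul_smul, smul_eq_mul, Real.sqrt_mul (by positivity),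
      Real.sqrt_mul_self hc.le]
  rw [dotNormalize, dotNormalize, hsq, smul_smul, _root_.mul_inv_rev, mul_assoc,
    inv_mul_cancel₀ hc.ne', mul_one]

theorem continuousAt_dotNormalize {v : ι → ℝ} (hv : v ≠ 0) : ContinuousAt dotNormalize v := by
  have hnorm : √(v ⬝ᵥ v) ≠ 0 := by
    rw [Real.sqrt_ne_zero', lt_iff_le_and_ne]
    exact ⟨Finset.sum_nonneg fun i _ => mul_self_nonneg (v i),
      fun h => hv (dotProduct_self_eq_zero.1 h.symm)⟩
  exact ((Real.continuous_sqrt.comp (continuous_id.dotProduct continuous_id)).continuousAt.inv₀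
    hnorm).smul continuousAt_id

theorem tendsto_dotNormalize_of_eventually_eq_pos_smul {α : Type*} {l : Filter α}
    {θ f : α → ι → ℝ} {c : α → ℝ} {v : ι → ℝ} (hv : v ≠ 0) (hf : Tendsto f l (𝓝 v))
    (hθ : ∀ᶠ a in l, 0 < c a ∧ θ a = c a • f a) :
    (∀ᶠ a in l, θ a ≠ 0) ∧ Tendsto (fun a => dotNormalize (θ a)) l (𝓝 (dotNormalize v)) := by
  refine ⟨?_, ((continuousAt_dotNormalize hv).tendsto.comp hf).congr' ?_⟩
  · filter_upwards [hθ, hf.eventually_ne hv] with a ⟨hc, ha⟩ hfa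
    rw [ha]
    exact smul_ne_zero hc.ne' hfa
  · filter_upwards [hθ] with a ⟨hc, ha⟩
    rw [Function.comp_apply, ha, dotNormalize_smul_of_pos hc]

end DotNormalize

theorem direction_of_maximal_outlyingness_eq_lim_normalized_least_squares_general
    (p n : ℕ)
    (xs : Fin n → Fin p → ℝ) (w : Fin n → ℝ) (hw : ∀ i, 0 ≤ w i)
    (hnw : 1 < ∑ i, w i) (x : Fin p → ℝ)
    (μw : Fin p → ℝ) (hμw : μw = (1 / ∑ i, w i) • ∑ i, w i • xs i)
    (Sw : Matrix (Fin p) (Fin p) ℝ)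
    (hSw : Sw = (1 / (∑ i, w i - 1)) •
      ∑ i, w i • vecMulVec (xs i - μw) (xs i - μw))
    (hSwinv : IsUnit Sw) (hxμ : x ≠ μw)
    (μ : ℝ → Fin p → ℝ)
    (hμ : ∀ ε : ℝ, μ ε = (1 / (∑ i, w i + ε)) • (∑ i, w i • xs i + ε • x))
    (y : Fin (n + 1) → ℝ) (hy : y = Pi.single (Fin.last n) 1)
    (X : ℝ → Matrix (Fin (n + 1)) (Fin p) ℝ)
    (hX : ∀ ε : ℝ, X ε = Matrix.of fun i j =>
      Fin.lastCases (Real.sqrt ε * (x j - μ ε j))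
        (fun k => Real.sqrt (w k) * (xs k j - μ ε j)) i)
    (θ : ℝ → Fin p → ℝ)
    (hθ : ∀ ε : ℝ, θ ε = ((X ε)ᵀ * X ε)⁻¹ *ᵥ ((X ε)ᵀ *ᵥ y)) :
    (∃ ε₁ : ℝ, 0 < ε₁ ∧ ∀ ε : ℝ, 0 < ε → ε < ε₁ → θ ε ≠ 0) ∧
    Tendsto (fun ε : ℝ => (Real.sqrt (θ ε ⬝ᵥ θ ε))⁻¹ • θ ε) (𝓝[>] 0)
      (𝓝 ((Real.sqrt ((Sw⁻¹ *ᵥ (x - μw)) ⬝ᵥ (Sw⁻¹ *ᵥ (x - μw))))⁻¹ •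
        (Sw⁻¹ *ᵥ (x - μw)))) := by
  set G : ℝ → Matrix (Fin p) (Fin p) ℝ := fun ε =>
    ∑ k, w k • vecMulVec (xs k - μ ε) (xs k - μ ε) + ε • vecMulVec (x - μ ε) (x - μ ε)
  have hnw₁ : ∑ i, w i - 1 ≠ 0 := (sub_pos.2 hnw).ne'
  have hμ0 : μ 0 = μw := by simp [hμ, hμw]
  have hG0 : G 0 = (∑ i, w i - 1) • Sw := by simp [G, hμ0, hSw, smul_smul, hnw₁]
  have hθG : ∀ ε > 0, θ ε = √ε • ((G ε)⁻¹ *ᵥ (x - μ ε)) := by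
    intro ε hε
    have hXε : X ε = of fun i j => Fin.lastCases ((√ε • (x - μ ε)) j)
        (fun k => (√(w k) • (xs k - μ ε)) j) i := hX ε
    rw [hθ, hy, hXε, transpose_mul_self_of_lastCases, transpose_mulVec_single_last_of_lastCases,
      mulVec_smul]
    simp only [G, vecMulVec_sqrt_smul_self (hw _), vecMulVec_sqrt_smul_self hε.le]
  have hμc : ContinuousAt μ 0 := by
    rw [funext hμ]
    fun_prop (disch := simpa using (zero_lt_one.trans hnw).ne')
  have hf : Tendsto (fun ε => (G ε)⁻¹ *ᵥ (x - μ ε)) (𝓝[>] 0)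
      (𝓝 ((∑ i, w i - 1)⁻¹ • (Sw⁻¹ *ᵥ (x - μw)))) := by
    have hlim := (ContinuousAt.matrix_inv_mulVec (A := G) (b := fun ε => x - μ ε) (by fun_prop)
      (by fun_prop) (hG0 ▸ hSwinv.smul (Units.mk0 _ hnw₁))).tendsto
    rw [hG0, hμ0, inv_smul_of_ne_zero _ hnw₁, smul_mulVec] at hlim
    exact hlim.mono_left nhdsWithin_le_nhds
  have hv : Sw⁻¹ *ᵥ (x - μw) ≠ 0 := fun h => hxμ <| sub_eq_zero.1 <|
    mulVec_injective_iff_isUnit.2 (isUnit_nonsing_inv_iff.2 hSwinv) (h.trans (mulVec_zero _).symm)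
  obtain ⟨hne, hlim⟩ := tendsto_dotNormalize_of_eventually_eq_pos_smul
    (smul_ne_zero (inv_ne_zero hnw₁) hv) hf <| by
      filter_upwards [self_mem_nhdsWithin] with ε hε
      exact ⟨Real.sqrt_pos.2 hε, hθG ε hε⟩
  refine ⟨?_, by rwa [dotNormalize_smul_of_pos (inv_pos.2 (sub_pos.2 hnw))] at hlim⟩
  obtain ⟨ε₁, hε₁, hsub⟩ := mem_nhdsGT_iff_exists_Ioo_subset.1 hne
  exact ⟨ε₁, hε₁, fun ε h₀ h₁ => hsub ⟨h₀, h₁⟩⟩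

/-- Theorem 2.1: the direction of maximal outlyingness
`a(x) = Σ_w⁻¹(x − μ_w)/‖Σ_w⁻¹(x − μ_w)‖` is the limit, as `ε → 0⁺`, of the
normalized least-squares solutions `θ_ε/‖θ_ε‖` of the regression of
`y_{w,ε} = e_{n+1}` on the weighted, centred, augmented data matrix
`X_{w,ε}`; in particular `θ_ε ≠ 0` for small `ε > 0` and the limit exists. -/
theorem direction_of_maximal_outlyingness_eq_lim_normalized_least_squares
    (p n : ℕ) (hp : 1 ≤ p) (hn : 1 ≤ n)
    (xs : Fin n → Fin p → ℝ) (w : Fin n → ℝ) (hw : ∀ i, 0 ≤ w i)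
    (hnw : 1 < ∑ i, w i) (x : Fin p → ℝ)
    (μw : Fin p → ℝ) (hμw : μw = (1 / ∑ i, w i) • ∑ i, w i • xs i)
    (Sw : Matrix (Fin p) (Fin p) ℝ)
    (hSw : Sw = (1 / (∑ i, w i - 1)) •
      ∑ i, w i • vecMulVec (xs i - μw) (xs i - μw))
    (hSwinv : IsUnit Sw) (hxμ : x ≠ μw)
    (μ : ℝ → Fin p → ℝ)
    (hμ : ∀ ε : ℝ, μ ε = (1 / (∑ i, w i + ε)) • (∑ i, w i • xs i + ε • x))
    (y : Fin (n + 1) → ℝ) (hy : y = Pi.single (Fin.last n) 1)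
    (X : ℝ → Matrix (Fin (n + 1)) (Fin p) ℝ)
    (hX : ∀ ε : ℝ, X ε = Matrix.of fun i j =>
      Fin.lastCases (Real.sqrt ε * (x j - μ ε j))
        (fun k => Real.sqrt (w k) * (xs k j - μ ε j)) i)
    (ε₀ : ℝ) (hε₀ : 0 < ε₀)
    (hgram : ∀ ε : ℝ, 0 < ε → ε < ε₀ → IsUnit ((X ε)ᵀ * X ε))
    (θ : ℝ → Fin p → ℝ)
    (hθ : ∀ ε : ℝ, θ ε = ((X ε)ᵀ * X ε)⁻¹ *ᵥ ((X ε)ᵀ *ᵥ y)) :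
    (∃ ε₁ : ℝ, 0 < ε₁ ∧ ∀ ε : ℝ, 0 < ε → ε < ε₁ → θ ε ≠ 0) ∧
    Tendsto (fun ε : ℝ => (Real.sqrt (θ ε ⬝ᵥ θ ε))⁻¹ • θ ε) (𝓝[>] 0)
      (𝓝 ((Real.sqrt ((Sw⁻¹ *ᵥ (x - μw)) ⬝ᵥ (Sw⁻¹ *ᵥ (x - μw))))⁻¹ •
        (Sw⁻¹ *ᵥ (x - μw)))) :=
  direction_of_maximal_outlyingness_eq_lim_normalized_least_squares_general p n xs w hw hnw x μw hμw
    Sw hSw hSwinv hxμ μ hμ y hy X hX θ hθ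
end

section
/- (In-sample version of Theorem 2.1.) Let p, n ≥ 1, let x₁, …, xₙ ∈ ℝ^p with weights w₁, …, wₙ ≥ 0 satisfying n_w = Σᵢ wᵢ > 1, and fix an index i with wᵢ > 0. Let μ_w = (1/n_w) Σⱼ wⱼ xⱼ and Σ_w = (1/(n_w − 1)) Σⱼ wⱼ (xⱼ − μ_w)(xⱼ − μ_w)ᵀ; assume Σ_w is invertible and xᵢ ≠ μ_w. Let X_w be the n×p matrix whose j-th row is √wⱼ (xⱼ − μ_w)ᵀ, let y_w = eᵢ ∈ ℝⁿ be the i-th standard basis vector, and assume X_wᵀ X_w is invertible, so that θ = (X_wᵀ X_w)⁻¹ X_wᵀ y_w is the unique minimizer of β ↦ ‖y_w − X_w β‖² over β ∈ ℝ^p. Then θ ≠ 0 and θ / ‖θ‖ = Σ_w⁻¹(xᵢ − μ_w) / ‖Σ_w⁻¹(xᵢ − μ_w)‖, i.e., the normalized least-squares solution equals the direction of maximal outlyingness a(xᵢ). -/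
open Matrix

/-- In-sample version of Theorem 2.1: if `xᵢ` is a data point with positive
weight, the normalized least-squares solution `θ/‖θ‖` of regressing the `i`-th
basis vector on the weighted centred data matrix `X_w` equals the direction of
maximal outlyingness `a(xᵢ) = Σ_w⁻¹(xᵢ − μ_w)/‖Σ_w⁻¹(xᵢ − μ_w)‖`. -/
theorem in_sample_direction_of_maximal_outlyingness
    (p n : ℕ) (hp : 1 ≤ p) (hn : 1 ≤ n)
    (xs : Fin n → Fin p → ℝ) (w : Fin n → ℝ) (hw : ∀ j, 0 ≤ w j)
    (hnw : 1 < ∑ j, w j)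
    (i : Fin n) (hwi : 0 < w i)
    (μw : Fin p → ℝ) (hμw : μw = (1 / ∑ j, w j) • ∑ j, w j • xs j)
    (Sw : Matrix (Fin p) (Fin p) ℝ)
    (hSw : Sw = (1 / (∑ j, w j - 1)) •
      ∑ j, w j • vecMulVec (xs j - μw) (xs j - μw))
    (hSwinv : IsUnit Sw) (hxμ : xs i ≠ μw)
    (X : Matrix (Fin n) (Fin p) ℝ)
    (hX : X = Matrix.of fun j k => Real.sqrt (w j) * (xs j k - μw k))
    (y : Fin n → ℝ) (hy : y = Pi.single i 1)
    (hgram : IsUnit (Xᵀ * X))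
    (θ : Fin p → ℝ) (hθ : θ = (Xᵀ * X)⁻¹ *ᵥ (Xᵀ *ᵥ y))
    (hmin : ∀ β : Fin p → ℝ, β ≠ θ →
      (y - X *ᵥ θ) ⬝ᵥ (y - X *ᵥ θ) < (y - X *ᵥ β) ⬝ᵥ (y - X *ᵥ β)) :
    θ ≠ 0 ∧
      (Real.sqrt (θ ⬝ᵥ θ))⁻¹ • θ =
        (Real.sqrt ((Sw⁻¹ *ᵥ (xs i - μw)) ⬝ᵥ (Sw⁻¹ *ᵥ (xs i - μw))))⁻¹ •
          (Sw⁻¹ *ᵥ (xs i - μw)) := by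
  have hnw0 : 0 < (∑ j, w j) - 1 := by linarith
  have hdetS : IsUnit Sw.det := (Matrix.isUnit_iff_isUnit_det _).mp hSwinv
  have hdetG : IsUnit (Xᵀ * X).det := (Matrix.isUnit_iff_isUnit_det _).mp hgram
  have hgramS : Xᵀ * X = ((∑ j, w j) - 1) • Sw := by
    rw [hSw, smul_smul, mul_one_div_cancel hnw0.ne', one_smul, hX]
    ext k l
    simp only [Matrix.mul_apply, Matrix.transpose_apply, Matrix.of_apply,
      Matrix.sum_apply, Matrix.smul_apply, Matrix.vecMulVec_apply,
      smul_eq_mul, Pi.sub_apply]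
    refine Finset.sum_congr rfl fun j _ => ?_
    rw [show Real.sqrt (w j) * (xs j k - μw k) * (Real.sqrt (w j) * (xs j l - μw l))
        = (Real.sqrt (w j) * Real.sqrt (w j)) * ((xs j k - μw k) * (xs j l - μw l)) by ring,
      Real.mul_self_sqrt (hw j)]
  have hXty : Xᵀ *ᵥ y = Real.sqrt (w i) • (xs i - μw) := by
    subst hy hX
    ext k
    simp [Matrix.mulVec, dotProduct, Pi.single_apply, mul_ite]
  set c : ℝ := Real.sqrt (w i) / ((∑ j, w j) - 1) with hcdef
  have hc : 0 < c := div_pos (Real.sqrt_pos.mpr hwi) hnw0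
  set v : Fin p → ℝ := Sw⁻¹ *ᵥ (xs i - μw) with hvdef
  have hGθ : (Xᵀ * X) *ᵥ θ = Real.sqrt (w i) • (xs i - μw) := by
    rw [hθ, Matrix.mulVec_mulVec, Matrix.mul_nonsing_inv _ hdetG, Matrix.one_mulVec, hXty]
  have hSθ : Sw *ᵥ θ = c • (xs i - μw) := by
    rw [hgramS, Matrix.smul_mulVec] at hGθ
    have h2 : Sw *ᵥ θ = ((∑ j, w j) - 1)⁻¹ • (Real.sqrt (w i) • (xs i - μw)) := by
      rw [← hGθ, smul_smul, inv_mul_cancel₀ hnw0.ne', one_smul]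
    rw [h2, smul_smul, hcdef, div_eq_inv_mul]
  have hθv : θ = c • v := by
    have h3 : Sw⁻¹ *ᵥ (Sw *ᵥ θ) = θ := by
      rw [Matrix.mulVec_mulVec, Matrix.nonsing_inv_mul _ hdetS, Matrix.one_mulVec]
    rw [← h3, hSθ, Matrix.mulVec_smul]
  have hsub : xs i - μw ≠ 0 := sub_ne_zero_of_ne hxμ
  have hv0 : v ≠ 0 := by
    intro h
    apply hsub
    have h4 : Sw *ᵥ v = xs i - μw := by
      rw [hvdef, Matrix.mulVec_mulVec, Matrix.mul_nonsing_inv _ hdetS, Matrix.one_mulVec]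
    rw [h, Matrix.mulVec_zero] at h4
    exact h4.symm
  have hθ0 : θ ≠ 0 := by
    rw [hθv]
    exact smul_ne_zero hc.ne' hv0
  refine ⟨hθ0, ?_⟩
  have hvv : 0 ≤ v ⬝ᵥ v := Finset.sum_nonneg fun j _ => mul_self_nonneg _
  have hvvpos : 0 < v ⬝ᵥ v := by
    rcases lt_or_eq_of_le hvv with h | h
    · exact h
    · exact absurd ((dotProduct_self_eq_zero).mp h.symm) hv0
  have hs : 0 < Real.sqrt (v ⬝ᵥ v) := Real.sqrt_pos.mpr hvvpos
  have hdot : θ ⬝ᵥ θ = (c * c) * (v ⬝ᵥ v) := by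
    rw [hθv, smul_dotProduct, dotProduct_smul, smul_eq_mul, smul_eq_mul]
    ring
  have hsqrt : Real.sqrt (θ ⬝ᵥ θ) = c * Real.sqrt (v ⬝ᵥ v) := by
    rw [hdot, Real.sqrt_mul (mul_self_nonneg c), Real.sqrt_mul_self hc.le]
  rw [hsqrt, hθv, mul_inv, smul_smul]
  congr 1
  field_simp
end
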